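/- arXiv:1108.0870 — 8 statements merged into one kernel-verified Lean document; each statement's English description precedes it below -/
import Mathlib

section
/- Let B be a symmetric positive definite r×r real matrix, A an r×m real matrix, Σ a symmetric m×m real matrix with Σ − AᵀB⁻¹A positive definite, H an r×t real matrix, F an m×t real matrix, and S a symmetric positive semidefinite t×t real matrix. Then det( I_{r+m} + [H; F] · S · [H; F]ᵀ · (fromBlocks(B, A; Aᵀ, Σ))⁻¹ ) = det( I_t + S·HᵀB⁻¹H + S·(AᵀB⁻¹H − F)ᵀ(Σ − AᵀB⁻¹A)⁻¹(AᵀB⁻¹H − F) ). -/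
/-!
Write `M = [H; F]` and `E = fromBlocks B A Aᵀ Σ`. Sylvester's identity `det (1 + X Y) = det (1 + Y X)`
moves the left side to `det (1 + S Mᵀ E⁻¹ M)`, and the Schur-complement formula for `E⁻¹` turns the
quadratic form `Mᵀ E⁻¹ M` into `Hᵀ B⁻¹ H + (Hᵀ B⁻¹ A - Fᵀ) (Σ - Aᵀ B⁻¹ A)⁻¹ (Aᵀ B⁻¹ H - F)`;
the symmetry of `B⁻¹` makes the middle factor the transpose of the last one.
-/

open Matrix

namespace Matrix

variable {l m n α : Type*} [Fintype m] [Fintype n] [DecidableEq m] [DecidableEq n] [CommRing α]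

theorem transpose_fromRows_mul_inv_fromBlocks_mul_fromRows
    {B : Matrix m m α} {A : Matrix m n α} {C : Matrix n m α} {D : Matrix n n α}
    (hB : IsUnit B) (hD : IsUnit (D - C * B⁻¹ * A)) (H : Matrix m l α) (F : Matrix n l α) :
    (fromRows H F)ᵀ * (fromBlocks B A C D)⁻¹ * fromRows H F =
      Hᵀ * B⁻¹ * H + (Hᵀ * B⁻¹ * A - Fᵀ) * (D - C * B⁻¹ * A)⁻¹ * (C * B⁻¹ * H - F) := by
  have := hB.invertible
  have hBinv : ⅟B = B⁻¹ := invOf_eq_nonsing_inv B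
  have : Invertible (D - C * ⅟B * A) := hBinv ▸ hD.invertible
  have := fromBlocks₁₁Invertible B A C D
  rw [← invOf_eq_nonsing_inv (fromBlocks B A C D), invOf_fromBlocks₁₁_eq, transpose_fromRows,
    fromCols_mul_fromBlocks, fromCols_mul_fromRows]
  simp only [invOf_eq_nonsing_inv, Matrix.mul_add, Matrix.add_mul, Matrix.mul_sub, Matrix.sub_mul, Matrix.neg_mul,
    Matrix.mul_neg, Matrix.mul_assoc]
  abel

end Matrix

theorem stmt2_general {r m t : ℕ}
    (B : Matrix (Fin r) (Fin r) ℝ) (hB : B.PosDef)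
    (A : Matrix (Fin r) (Fin m) ℝ)
    (Sg : Matrix (Fin m) (Fin m) ℝ)
    (hschur : (Sg - Aᵀ * B⁻¹ * A).PosDef)
    (H : Matrix (Fin r) (Fin t) ℝ) (F : Matrix (Fin m) (Fin t) ℝ)
    (S : Matrix (Fin t) (Fin t) ℝ) :
    (1 + fromRows H F * S * (fromRows H F)ᵀ * (fromBlocks B A Aᵀ Sg)⁻¹).det =
      (1 + S * (Hᵀ * B⁻¹ * H) +
        S * ((Aᵀ * B⁻¹ * H - F)ᵀ * (Sg - Aᵀ * B⁻¹ * A)⁻¹ * (Aᵀ * B⁻¹ * H - F))).det := by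
  have hBinv_symm : B⁻¹ᵀ = B⁻¹ := hB.isHermitian.inv
  have hcoeff : (Aᵀ * B⁻¹ * H - F)ᵀ = Hᵀ * B⁻¹ * A - Fᵀ := by
    simp only [transpose_sub, transpose_mul, transpose_transpose, hBinv_symm, Matrix.mul_assoc]
  rw [Matrix.mul_assoc, Matrix.mul_assoc, det_one_add_mul_comm, Matrix.mul_assoc S,
    transpose_fromRows_mul_inv_fromBlocks_mul_fromRows hB.isUnit hschur.isUnit, hcoeff,
    Matrix.mul_add, add_assoc]

/-- The genie-aided determinant identity (cf. eq. (R1u) in the paper):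
`det(I + [H;F] S [H;F]ᵀ E⁻¹) = det(I + S Hᵀ B⁻¹ H + S (Aᵀ B⁻¹ H - F)ᵀ (Σ - Aᵀ B⁻¹ A)⁻¹ (Aᵀ B⁻¹ H - F))`. -/
theorem stmt2 {r m t : ℕ}
    (B : Matrix (Fin r) (Fin r) ℝ) (hB : B.PosDef)
    (A : Matrix (Fin r) (Fin m) ℝ)
    (Sg : Matrix (Fin m) (Fin m) ℝ) (hSg : Sg.IsSymm)
    (hschur : (Sg - Aᵀ * B⁻¹ * A).PosDef)
    (H : Matrix (Fin r) (Fin t) ℝ) (F : Matrix (Fin m) (Fin t) ℝ)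
    (S : Matrix (Fin t) (Fin t) ℝ) (hS : S.PosSemidef) :
    (1 + fromRows H F * S * (fromRows H F)ᵀ * (fromBlocks B A Aᵀ Sg)⁻¹).det =
      (1 + S * (Hᵀ * B⁻¹ * H) +
        S * ((Aᵀ * B⁻¹ * H - F)ᵀ * (Sg - Aᵀ * B⁻¹ * A)⁻¹ * (Aᵀ * B⁻¹ * H - F))).det :=
  stmt2_general B hB A Sg hschur H F S
end

section
/- Let B be a symmetric positive definite r×r real matrix, A an r×m real matrix, Σ a symmetric m×m real matrix with Σ − AᵀB⁻¹A positive definite, H an r×t real matrix, F an m×t real matrix, and S a symmetric positive semidefinite t×t real matrix satisfying the 'Markov' condition S·Fᵀ = S·Hᵀ·B⁻¹·A. Then: (i) S·O = 0, where O = ½·(AᵀB⁻¹H − F)ᵀ(Σ − AᵀB⁻¹A)⁻¹(AᵀB⁻¹H − F); and (ii) det( I_{r+m} + [H; F]·S·[H; F]ᵀ·(fromBlocks(B, A; Aᵀ, Σ))⁻¹ ) = det( I_r + H·S·Hᵀ·B⁻¹ ), i.e., the genie-aided determinant expression collapses to the determinant expression of the channel without side information. -/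
open Matrix

/-- Under the Markov condition `S Fᵀ = S Hᵀ B⁻¹ A`: (i) `S O = 0` where
`O = ½ (Aᵀ B⁻¹ H - F)ᵀ (Σ - Aᵀ B⁻¹ A)⁻¹ (Aᵀ B⁻¹ H - F)`, and (ii) the genie-aided
determinant collapses to `det(I + H S Hᵀ B⁻¹)`. -/
theorem stmt3 {r m t : ℕ}
    (B : Matrix (Fin r) (Fin r) ℝ) (hB : B.PosDef)
    (A : Matrix (Fin r) (Fin m) ℝ)
    (Sg : Matrix (Fin m) (Fin m) ℝ) (hSg : Sg.IsSymm)
    (hschur : (Sg - Aᵀ * B⁻¹ * A).PosDef)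
    (H : Matrix (Fin r) (Fin t) ℝ) (F : Matrix (Fin m) (Fin t) ℝ)
    (S : Matrix (Fin t) (Fin t) ℝ) (hS : S.PosSemidef)
    (hMarkov : S * Fᵀ = S * Hᵀ * B⁻¹ * A)
    (O : Matrix (Fin t) (Fin t) ℝ)
    (hO : O = (1/2 : ℝ) •
      ((Aᵀ * B⁻¹ * H - F)ᵀ * (Sg - Aᵀ * B⁻¹ * A)⁻¹ * (Aᵀ * B⁻¹ * H - F))) :
    S * O = 0 ∧
      (1 + fromRows H F * S * (fromRows H F)ᵀ * (fromBlocks B A Aᵀ Sg)⁻¹).det =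
        (1 + H * S * Hᵀ * B⁻¹).det := by
  have hBsymm : Bᵀ = B := by
    rw [← conjTranspose_eq_transpose_of_trivial]; exact hB.1
  have hSsymm : Sᵀ = S := by
    rw [← conjTranspose_eq_transpose_of_trivial]; exact hS.1
  have hBinv : (B⁻¹)ᵀ = B⁻¹ := by rw [transpose_nonsing_inv, hBsymm]
  have hBdet : IsUnit B.det := isUnit_iff_ne_zero.mpr hB.det_pos.ne'
  have hBB : B * B⁻¹ = 1 := mul_nonsing_inv _ hBdet
  have hBB' : B⁻¹ * B = 1 := nonsing_inv_mul _ hBdet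
  -- part (i)
  have key : S * (Aᵀ * B⁻¹ * H - F)ᵀ = 0 := by
    have h1 : (Aᵀ * B⁻¹ * H - F)ᵀ = Hᵀ * B⁻¹ * A - Fᵀ := by
      simp [transpose_sub, transpose_mul, hBinv, Matrix.mul_assoc]
    rw [h1, Matrix.mul_sub, hMarkov]
    simp [Matrix.mul_assoc]
  have part1 : S * O = 0 := by
    rw [hO, Matrix.mul_smul, ← Matrix.mul_assoc, ← Matrix.mul_assoc, key,
      Matrix.zero_mul, Matrix.zero_mul, smul_zero]
  refine ⟨part1, ?_⟩
  -- part (ii)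
  haveI : Invertible B := B.invertibleOfIsUnitDet hBdet
  have hMdet : IsUnit (Sg - Aᵀ * B⁻¹ * A).det := isUnit_iff_ne_zero.mpr hschur.det_pos.ne'
  set X : Matrix (Fin r) (Fin r) ℝ := H * S * Hᵀ with hXdef
  set W : Matrix (Fin r ⊕ Fin m) (Fin r ⊕ Fin m) ℝ := fromBlocks B A Aᵀ Sg with hWdef
  have hWdet : W.det = B.det * (Sg - Aᵀ * B⁻¹ * A).det := by
    rw [hWdef, det_fromBlocks₁₁, invOf_eq_nonsing_inv]
  have hWunit : IsUnit W.det := by rw [hWdet]; exact hBdet.mul hMdet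
  -- positive definite B + X
  have hHSH : X.PosSemidef := by
    have := hS.mul_mul_conjTranspose_same H
    simpa [hXdef, conjTranspose_eq_transpose_of_trivial] using this
  have hB' : (B + X).PosDef := hB.add_posSemidef hHSH
  have hB'det : IsUnit (B + X).det := isUnit_iff_ne_zero.mpr hB'.det_pos.ne'
  haveI : Invertible (B + X) := Matrix.invertibleOfIsUnitDet _ hB'det
  -- Markov consequences
  have hFS : F * S = Aᵀ * B⁻¹ * (H * S) := by
    have := congrArg Matrix.transpose hMarkov
    simp only [transpose_mul, hSsymm, hBinv, transpose_transpose] at this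
    rw [this]
    simp [Matrix.mul_assoc]
  have hc1 : H * S * Fᵀ = X * B⁻¹ * A := by
    rw [Matrix.mul_assoc H S Fᵀ, hMarkov, hXdef]
    simp [Matrix.mul_assoc]
  have hc2 : F * S * Hᵀ = Aᵀ * B⁻¹ * X := by
    rw [hFS, hXdef]
    simp [Matrix.mul_assoc]
  have hc3 : F * S * Fᵀ = Aᵀ * B⁻¹ * X * B⁻¹ * A := by
    rw [Matrix.mul_assoc F S Fᵀ, hMarkov]
    simp only [← Matrix.mul_assoc]
    rw [hc2]
  -- block decomposition of G S Gᵀ and the sum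
  have hGG : fromRows H F * S * (fromRows H F)ᵀ =
      fromBlocks (H * S * Hᵀ) (H * S * Fᵀ) (F * S * Hᵀ) (F * S * Fᵀ) := by
    rw [transpose_fromRows, fromRows_mul, fromRows_mul_fromCols]
  have hL : Aᵀ + Aᵀ * B⁻¹ * X = Aᵀ * B⁻¹ * (B + X) := by
    rw [Matrix.mul_add, Matrix.mul_assoc Aᵀ B⁻¹ B, hBB', Matrix.mul_one]
  have hR : A + X * B⁻¹ * A = (B + X) * B⁻¹ * A := by
    rw [Matrix.add_mul, Matrix.add_mul, hBB, Matrix.one_mul]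
  have hsum : W + fromRows H F * S * (fromRows H F)ᵀ =
      fromBlocks (B + X) ((B + X) * B⁻¹ * A) (Aᵀ * B⁻¹ * (B + X))
        (Sg + Aᵀ * B⁻¹ * X * B⁻¹ * A) := by
    rw [hGG, hWdef, fromBlocks_add, hc1, hc2, hc3, ← hXdef, hL, hR]
  have hdetSum : (W + fromRows H F * S * (fromRows H F)ᵀ).det =
      (B + X).det * (Sg - Aᵀ * B⁻¹ * A).det := by
    rw [hsum, det_fromBlocks₁₁]
    congr 1
    congr 1
    have hmid : Aᵀ * B⁻¹ * (B + X) * ⅟(B + X) * ((B + X) * B⁻¹ * A) =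
        Aᵀ * B⁻¹ * A + Aᵀ * B⁻¹ * X * B⁻¹ * A := by
      rw [Matrix.mul_assoc (Aᵀ * B⁻¹) (B + X), mul_invOf_self, Matrix.mul_one, ← hR,
        Matrix.mul_add]
      simp [Matrix.mul_assoc]
    rw [hmid]
    abel
  -- final determinant computation
  have hfact : (1 : Matrix (Fin r ⊕ Fin m) (Fin r ⊕ Fin m) ℝ) +
      fromRows H F * S * (fromRows H F)ᵀ * W⁻¹ =
      (W + fromRows H F * S * (fromRows H F)ᵀ) * W⁻¹ := by
    rw [Matrix.add_mul, mul_nonsing_inv _ hWunit]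
  have hrhs : (1 : Matrix (Fin r) (Fin r) ℝ) + H * S * Hᵀ * B⁻¹ = (B + X) * B⁻¹ := by
    rw [Matrix.add_mul, hBB, hXdef]
  rw [hfact, hrhs, det_mul, det_mul, hdetSum, det_nonsing_inv, det_nonsing_inv, hWdet]
  have h1 : B.det ≠ 0 := hB.det_pos.ne'
  have h2 : (Sg - Aᵀ * B⁻¹ * A).det ≠ 0 := hschur.det_pos.ne'
  simp only [Ring.inverse_eq_inv']
  rw [mul_inv, show ∀ a b c d : ℝ, a * b * (c * d) = a * c * (b * d) from fun a b c d => by ring,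
    mul_inv_cancel₀ h2, mul_one]
end

section
/- Let B be a symmetric positive definite r×r real matrix, A an r×m real matrix, Σ a symmetric m×m real matrix with Σ − AᵀB⁻¹A positive definite, H an r×t real matrix, F an m×t real matrix, S a symmetric positive semidefinite t×t real matrix satisfying S·Fᵀ = S·Hᵀ·B⁻¹·A, and G an r×q real matrix. Let E = fromBlocks(B, A; Aᵀ, Σ) and let [G; 0] denote the (r+m)×q block-column matrix with upper block G and lower block the zero m×q matrix. Then the matrix E + [H; F]·S·[H; F]ᵀ is invertible and [G; 0]ᵀ · ( E + [H; F]·S·[H; F]ᵀ )⁻¹ · [H; F] · S · [H; F]ᵀ · E⁻¹ · [G; 0] = Gᵀ·(B + H·S·Hᵀ)⁻¹·H·S·Hᵀ·B⁻¹·G. -/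
/-!
Put `K = Aᵀ B⁻¹`, `U = [1 0; K 1]` and `D = Σ - Aᵀ B⁻¹ A`. The Schur factorisation reads
`E = U diag(B, D) Uᵀ`, and the Markov condition `S Fᵀ = S Hᵀ Kᵀ` says that the perturbation
`P = [H;F] S [H;F]ᵀ` factors through the same `U`: `P = U diag(M, 0) Uᵀ` with `M = H S Hᵀ`.
Hence `E + P = U diag(B + M, D) Uᵀ` is invertible, and since `Uᵀ diag(Z, 0) U = diag(Z, 0)`,
one checks `(E + P) diag(Z, 0) E = P` for `Z = (B + M)⁻¹ M B⁻¹`, that is,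
`(E + P)⁻¹ P E⁻¹ = diag(Z, 0)`.
Compressing to the first block gives `Gᵀ Z G`.
-/

open Matrix

namespace Matrix

variable {l m n α : Type*} [Fintype l] [Fintype m]

theorem fromRows_zero_transpose_mul_fromBlocks₁₁_mul [Semiring α] [Fintype n]
    (G : Matrix l n α) (Z : Matrix l l α) :
    (fromRows G (0 : Matrix m n α))ᵀ * (fromBlocks Z 0 0 0 : Matrix (l ⊕ m) (l ⊕ m) α) *
      fromRows G (0 : Matrix m n α) = Gᵀ * Z * G := by
  rw [transpose_fromRows, transpose_zero, fromCols_mul_fromBlocks, fromCols_mul_fromRows]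
  simp

variable [DecidableEq l] [DecidableEq m]

section Semiring

variable [Semiring α]

theorem fromBlocks_eq_ldu (K : Matrix m l α) (X : Matrix l l α) (Y : Matrix m m α)
    (L : Matrix l m α) :
    fromBlocks X (X * L) (K * X) (K * X * L + Y) =
      fromBlocks 1 0 K 1 * fromBlocks X 0 0 Y * fromBlocks 1 L 0 1 := by
  simp [fromBlocks_multiply, Matrix.mul_assoc]

theorem ldu_add_ldu (K : Matrix m l α) (X X' : Matrix l l α) (Y Y' : Matrix m m α)
    (L : Matrix l m α) :
    fromBlocks 1 0 K 1 * fromBlocks X 0 0 Y * fromBlocks 1 L 0 1 +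
        fromBlocks 1 0 K 1 * fromBlocks X' 0 0 Y' * fromBlocks 1 L 0 1 =
      fromBlocks 1 0 K 1 * fromBlocks (X + X') 0 0 (Y + Y') * fromBlocks 1 L 0 1 := by
  rw [← Matrix.add_mul, ← Matrix.mul_add, fromBlocks_add, add_zero, add_zero]

theorem ldu_mul_fromBlocks₁₁_mul_ldu (K : Matrix m l α) (X X' Z : Matrix l l α)
    (Y Y' : Matrix m m α) (L : Matrix l m α) :
    fromBlocks 1 0 K 1 * fromBlocks X 0 0 Y * fromBlocks 1 L 0 1 * fromBlocks Z 0 0 0 *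
        (fromBlocks 1 0 K 1 * fromBlocks X' 0 0 Y' * fromBlocks 1 L 0 1) =
      fromBlocks 1 0 K 1 * fromBlocks (X * Z * X') 0 0 0 * fromBlocks 1 L 0 1 := by
  simp [fromBlocks_multiply, Matrix.mul_assoc]

end Semiring

section CommRing

variable [CommRing α]

theorem fromBlocks_eq_ldu_of_isUnit_det (B : Matrix l l α) (A : Matrix l m α) (C : Matrix m l α)
    (D : Matrix m m α) (hB : IsUnit B.det) :
    fromBlocks B A C D =
      fromBlocks 1 0 (C * B⁻¹) 1 * fromBlocks B 0 0 (D - C * B⁻¹ * A) *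
        fromBlocks 1 (B⁻¹ * A) 0 1 := by
  let := B.invertibleOfIsUnitDet hB
  simpa only [invOf_eq_nonsing_inv] using fromBlocks_eq_of_invertible₁₁ B A C D

theorem isUnit_ldu (K : Matrix m l α) {X : Matrix l l α} {Y : Matrix m m α} (L : Matrix l m α)
    (hX : IsUnit X) (hY : IsUnit Y) :
    IsUnit (fromBlocks 1 0 K 1 * fromBlocks X 0 0 Y * fromBlocks 1 L 0 1) := by
  rw [isUnit_iff_isUnit_det] at hX hY ⊢
  simpa [det_fromBlocks_zero₂₁] using hX.mul hY

theorem inv_mul_mul_inv_eq_of_mul_mul_eq [Fintype n] [DecidableEq n] {E E' P X : Matrix n n α}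
    (hE : IsUnit E) (hE' : IsUnit E') (h : E' * X * E = P) :
    E'⁻¹ * P * E⁻¹ = X := by
  rw [isUnit_iff_isUnit_det] at hE hE'
  rw [← h, Matrix.mul_assoc E', Matrix.nonsing_inv_mul_cancel_left _ _ hE',
    Matrix.mul_nonsing_inv_cancel_right _ _ hE]

theorem fromRows_mul_mul_transpose_eq_ldu {t : Type*} [Fintype t] (H : Matrix l t α)
    (F : Matrix m t α) (S : Matrix t t α) (K : Matrix m l α) (hS : Sᵀ = S)
    (hF : S * Fᵀ = S * Hᵀ * Kᵀ) :
    fromRows H F * S * (fromRows H F)ᵀ =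
      fromBlocks 1 0 K 1 * fromBlocks (H * S * Hᵀ) 0 0 0 * fromBlocks 1 Kᵀ 0 1 := by
  have hHF : H * S * Fᵀ = H * S * Hᵀ * Kᵀ := by
    rw [Matrix.mul_assoc, hF]; simp only [Matrix.mul_assoc]
  have hFH : F * S * Hᵀ = K * (H * S * Hᵀ) := by
    simpa [transpose_mul, hS, Matrix.mul_assoc] using congrArg transpose hHF
  have hFF : F * S * Fᵀ = K * (H * S * Hᵀ) * Kᵀ := by
    rw [Matrix.mul_assoc F, hF, ← hFH]; simp only [Matrix.mul_assoc]
  rw [← fromBlocks_eq_ldu, add_zero, transpose_fromRows, fromRows_mul, fromRows_mul_fromCols,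
    hHF, hFH, hFF]

end CommRing

end Matrix

theorem stmt5_general {r m t q : ℕ}
    (B : Matrix (Fin r) (Fin r) ℝ) (hB : B.PosDef)
    (A : Matrix (Fin r) (Fin m) ℝ)
    (Sg : Matrix (Fin m) (Fin m) ℝ)
    (hschur : (Sg - Aᵀ * B⁻¹ * A).PosDef)
    (H : Matrix (Fin r) (Fin t) ℝ) (F : Matrix (Fin m) (Fin t) ℝ)
    (S : Matrix (Fin t) (Fin t) ℝ) (hS : S.PosSemidef)
    (hMarkov : S * Fᵀ = S * Hᵀ * B⁻¹ * A)
    (G : Matrix (Fin r) (Fin q) ℝ)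
    (E : Matrix (Fin r ⊕ Fin m) (Fin r ⊕ Fin m) ℝ)
    (hE : E = fromBlocks B A Aᵀ Sg) :
    IsUnit (E + fromRows H F * S * (fromRows H F)ᵀ) ∧
      (fromRows G (0 : Matrix (Fin m) (Fin q) ℝ))ᵀ *
          (E + fromRows H F * S * (fromRows H F)ᵀ)⁻¹ *
          fromRows H F * S * (fromRows H F)ᵀ * E⁻¹ *
          fromRows G (0 : Matrix (Fin m) (Fin q) ℝ) =
        Gᵀ * (B + H * S * Hᵀ)⁻¹ * H * S * Hᵀ * B⁻¹ * G := by
  set D := Sg - Aᵀ * B⁻¹ * A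
  set M := H * S * Hᵀ
  set P := fromRows H F * S * (fromRows H F)ᵀ
  have hBsymm : Bᵀ = B := hB.isHermitian.eq
  have hBdet : IsUnit B.det := (isUnit_iff_isUnit_det B).mp hB.isUnit
  have hKt : (Aᵀ * B⁻¹)ᵀ = B⁻¹ * A := by
    rw [transpose_mul, transpose_transpose, transpose_nonsing_inv, hBsymm]
  have hE_ldu : E = fromBlocks 1 0 (Aᵀ * B⁻¹) 1 * fromBlocks B 0 0 D *
      fromBlocks 1 (B⁻¹ * A) 0 1 :=
    hE ▸ fromBlocks_eq_ldu_of_isUnit_det B A Aᵀ Sg hBdet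
  have hP_ldu : P = fromBlocks 1 0 (Aᵀ * B⁻¹) 1 * fromBlocks M 0 0 0 *
      fromBlocks 1 (B⁻¹ * A) 0 1 := by
    rw [← hKt]
    refine fromRows_mul_mul_transpose_eq_ldu H F S _ hS.isHermitian.eq ?_
    rw [hMarkov, hKt, Matrix.mul_assoc _ B⁻¹]
  have hEP_ldu : E + P = fromBlocks 1 0 (Aᵀ * B⁻¹) 1 * fromBlocks (B + M) 0 0 D *
      fromBlocks 1 (B⁻¹ * A) 0 1 := by
    rw [hE_ldu, hP_ldu, ldu_add_ldu, add_zero]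
  have hM : M.PosSemidef := by simpa using hS.mul_mul_conjTranspose_same H
  have hN : IsUnit (B + M) := (hB.add_posSemidef hM).isUnit
  have hEu : IsUnit E := hE_ldu ▸ isUnit_ldu _ _ hB.isUnit hschur.isUnit
  have hEPu : IsUnit (E + P) := hEP_ldu ▸ isUnit_ldu _ _ hN hschur.isUnit
  have hresolvent : (E + P)⁻¹ * P * E⁻¹ = fromBlocks ((B + M)⁻¹ * M * B⁻¹) 0 0 0 := by
    refine inv_mul_mul_inv_eq_of_mul_mul_eq hEu hEPu ?_
    rw [hEP_ldu, hE_ldu, hP_ldu, ldu_mul_fromBlocks₁₁_mul_ldu, Matrix.mul_assoc _ M,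
      Matrix.mul_nonsing_inv_cancel_left _ _ ((isUnit_iff_isUnit_det _).mp hN),
      Matrix.nonsing_inv_mul_cancel_right _ _ hBdet]
  refine ⟨hEPu, ?_⟩
  calc _ = (fromRows G (0 : Matrix (Fin m) (Fin q) ℝ))ᵀ * ((E + P)⁻¹ * P * E⁻¹) *
        fromRows G (0 : Matrix (Fin m) (Fin q) ℝ) := by simp only [P, Matrix.mul_assoc]
    _ = _ := by
      rw [hresolvent, fromRows_zero_transpose_mul_fromBlocks₁₁_mul]
      simp only [M, Matrix.mul_assoc]

/-- Cross-gradient identity under the Markov condition: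
`E + [H;F] S [H;F]ᵀ` is invertible and
`[G;0]ᵀ (E + [H;F] S [H;F]ᵀ)⁻¹ [H;F] S [H;F]ᵀ E⁻¹ [G;0] = Gᵀ (B + H S Hᵀ)⁻¹ H S Hᵀ B⁻¹ G`. -/
theorem stmt5 {r m t q : ℕ}
    (B : Matrix (Fin r) (Fin r) ℝ) (hB : B.PosDef)
    (A : Matrix (Fin r) (Fin m) ℝ)
    (Sg : Matrix (Fin m) (Fin m) ℝ) (hSg : Sg.IsSymm)
    (hschur : (Sg - Aᵀ * B⁻¹ * A).PosDef)
    (H : Matrix (Fin r) (Fin t) ℝ) (F : Matrix (Fin m) (Fin t) ℝ)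
    (S : Matrix (Fin t) (Fin t) ℝ) (hS : S.PosSemidef)
    (hMarkov : S * Fᵀ = S * Hᵀ * B⁻¹ * A)
    (G : Matrix (Fin r) (Fin q) ℝ)
    (E : Matrix (Fin r ⊕ Fin m) (Fin r ⊕ Fin m) ℝ)
    (hE : E = fromBlocks B A Aᵀ Sg) :
    IsUnit (E + fromRows H F * S * (fromRows H F)ᵀ) ∧
      (fromRows G (0 : Matrix (Fin m) (Fin q) ℝ))ᵀ *
          (E + fromRows H F * S * (fromRows H F)ᵀ)⁻¹ *
          fromRows H F * S * (fromRows H F)ᵀ * E⁻¹ *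
          fromRows G (0 : Matrix (Fin m) (Fin q) ℝ) =
        Gᵀ * (B + H * S * Hᵀ)⁻¹ * H * S * Hᵀ * B⁻¹ * G :=
  stmt5_general B hB A Sg hschur H F S hS hMarkov G E hE
end

section
/- Let A be an m×n real matrix and X a symmetric positive definite n×n real matrix. Then X + AᵀA is invertible and the m×m matrix I − A·(X + AᵀA)⁻¹·Aᵀ is positive definite. -/
open Matrix

/-- Appendix C step: for `X` symmetric positive definite, `X + AᵀA` is invertible and
`I - A (X + AᵀA)⁻¹ Aᵀ` is positive definite. -/
theorem stmt11 {m n : ℕ} (A : Matrix (Fin m) (Fin n) ℝ)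
    (X : Matrix (Fin n) (Fin n) ℝ) (hX : X.PosDef) :
    IsUnit (X + Aᵀ * A) ∧ (1 - A * (X + Aᵀ * A)⁻¹ * Aᵀ).PosDef := by
  have ht : (Aᵀ : Matrix (Fin n) (Fin m) ℝ) = Aᴴ := (conjTranspose_eq_transpose_of_trivial A).symm
  have hB : (X + Aᵀ * A).PosDef := by
    rw [ht]; exact hX.add_posSemidef (posSemidef_conjTranspose_mul_self A)
  refine ⟨hB.isUnit, ?_⟩
  have hXu : IsUnit X := hX.isUnit
  have hBu : IsUnit (X + Aᵀ * A) := hB.isUnit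
  -- C := 1 + A * X⁻¹ * Aᵀ is pos def
  have hC : (1 + A * X⁻¹ * Aᵀ).PosDef := by
    have : (A * X⁻¹ * Aᵀ).PosSemidef := by
      rw [ht]; exact hX.inv.posSemidef.mul_mul_conjTranspose_same A
    exact Matrix.PosDef.add_posSemidef (Matrix.PosDef.one) this
  -- key identity: (1 + A X⁻¹ Aᵀ) * (1 - A B⁻¹ Aᵀ) = 1
  have hXd : IsUnit X.det := (isUnit_iff_isUnit_det X).1 hXu
  have hBd : IsUnit (X + Aᵀ * A).det := (isUnit_iff_isUnit_det _).1 hBu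
  have key : (1 + A * X⁻¹ * Aᵀ) * (1 - A * (X + Aᵀ * A)⁻¹ * Aᵀ) = 1 := by
    have h2 : (X + Aᵀ * A) * (X + Aᵀ * A)⁻¹ = 1 := mul_nonsing_inv _ hBd
    have h3 : X⁻¹ * (Aᵀ * A) * (X + Aᵀ * A)⁻¹ = X⁻¹ - (X + Aᵀ * A)⁻¹ := by
      have hBX : (Aᵀ * A : Matrix (Fin n) (Fin n) ℝ) = (X + Aᵀ * A) - X := by abel
      nth_rewrite 1 [hBX]
      rw [mul_sub, sub_mul, mul_assoc, h2, mul_one, nonsing_inv_mul _ hXd, one_mul]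
    have expand : A * X⁻¹ * Aᵀ * (A * (X + Aᵀ * A)⁻¹ * Aᵀ)
        = A * X⁻¹ * Aᵀ - A * (X + Aᵀ * A)⁻¹ * Aᵀ := by
      calc A * X⁻¹ * Aᵀ * (A * (X + Aᵀ * A)⁻¹ * Aᵀ)
          = A * (X⁻¹ * (Aᵀ * A) * (X + Aᵀ * A)⁻¹) * Aᵀ := by
            simp only [Matrix.mul_assoc]
        _ = A * (X⁻¹ - (X + Aᵀ * A)⁻¹) * Aᵀ := by rw [h3]
        _ = A * X⁻¹ * Aᵀ - A * (X + Aᵀ * A)⁻¹ * Aᵀ := by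
            rw [Matrix.mul_sub, Matrix.sub_mul]
    rw [mul_sub, mul_one, add_mul, one_mul, expand]
    abel
  -- hence 1 - A B⁻¹ Aᵀ = (1 + A X⁻¹ Aᵀ)⁻¹, pos def
  have : (1 - A * (X + Aᵀ * A)⁻¹ * Aᵀ) = (1 + A * X⁻¹ * Aᵀ)⁻¹ :=
    (inv_eq_right_inv key).symm
  rw [this]
  exact hC.inv
end

section
/- Let S* be a nonzero symmetric positive semidefinite n×n real matrix, let η₁ > 0 be its largest eigenvalue, and let u be a unit eigenvector of S* for η₁. Then the matrix K = −η₁·u·uᵀ belongs to the tangent cone at S* of the set of symmetric positive semidefinite n×n matrices (viewed as a subset of the normed space of n×n real matrices), and tr(K) = −η₁ < 0. -/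
/-!
For a unit eigenvector `u` of `S` with eigenvalue `η`, the projection `P = 1 - u uᴴ` onto `u⊥`
satisfies `Pᴴ S P = S - η u uᴴ`, so `S - η u uᴴ` is again positive semidefinite. Hence `K` is the
direction from `S` to another point of the convex PSD cone, and such directions are tangent.
-/

open Matrix

attribute [local instance] Matrix.normedAddCommGroup Matrix.normedSpace

namespace Matrix

open scoped ComplexOrder

variable {ι 𝕜 : Type*} [RCLike 𝕜]

theorem convex_setOf_posSemidef : Convex ℝ {M : Matrix ι ι 𝕜 | M.PosSemidef} :=
  fun _ hA _ hB _ _ ha hb _ => (hA.smul ha).add (hB.smul hb)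

theorem PosSemidef.sub_smul_vecMulVec_of_mulVec_eq [Fintype ι] [DecidableEq ι]
    {S : Matrix ι ι 𝕜} (hS : S.PosSemidef) {η : ℝ} {u : ι → 𝕜} (hu : star u ⬝ᵥ u = 1)
    (heig : S *ᵥ u = (η : 𝕜) • u) :
    (S - (η : 𝕜) • vecMulVec u (star u)).PosSemidef := by
  set U := vecMulVec u (star u)
  have hSU : S * U = (η : 𝕜) • U := by rw [mul_vecMulVec, heig, smul_vecMulVec]
  have hUS : U * S = (η : 𝕜) • U := by
    rw [vecMulVec_mul, ← hS.isHermitian.eq, ← star_mulVec, heig, star_smul, RCLike.star_def,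
      RCLike.conj_ofReal, vecMulVec_smul]
  have hUU : U * U = U := by rw [vecMulVec_mul_vecMulVec, hu, one_smul]
  have hUH : Uᴴ = U := by rw [conjTranspose_vecMulVec, star_star]
  have hproj : (1 - U)ᴴ * S * (1 - U) = S - (η : 𝕜) • U := by
    rw [conjTranspose_sub, conjTranspose_one, hUH]
    simp only [sub_mul, mul_sub, one_mul, mul_one, hSU, hUS, smul_mul, hUU]
    abel
  exact hproj ▸ hS.conjTranspose_mul_mul_same _

end Matrix

theorem stmt12_general {n : ℕ} (S : Matrix (Fin n) (Fin n) ℝ)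
    (hS : S.PosSemidef)
    (η : ℝ) (hη : 0 < η) (u : Fin n → ℝ) (hu : u ⬝ᵥ u = 1)
    (heig : S *ᵥ u = η • u) :
    (-η) • vecMulVec u u ∈
        tangentConeAt ℝ {M : Matrix (Fin n) (Fin n) ℝ | M.PosSemidef} S ∧
      ((-η) • vecMulVec u u).trace = -η ∧ (-η : ℝ) < 0 := by
  have hS' : (S - η • vecMulVec u u).PosSemidef := by
    simpa using
      hS.sub_smul_vecMulVec_of_mulVec_eq (η := η) (by simpa using hu) (by simpa using heig)
  refine ⟨?_, ?_, neg_lt_zero.mpr hη⟩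
  · have := mem_tangentConeAt_of_segment_subset (convex_setOf_posSemidef.segment_subset hS hS')
    rwa [sub_sub_cancel_left, ← neg_smul] at this
  · rw [trace_smul, trace_vecMulVec, hu, smul_eq_mul, mul_one]

/-- Constraint qualification step (Appendix A): if `η₁ > 0` is the largest eigenvalue of a
nonzero positive semidefinite matrix `S*` with unit eigenvector `u`, then
`K = -η₁ u uᵀ` lies in the tangent cone of the PSD cone at `S*` and has trace `-η₁ < 0`. -/
theorem stmt12 {n : ℕ} (S : Matrix (Fin n) (Fin n) ℝ)
    (hS : S.PosSemidef) (hS0 : S ≠ 0)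
    (η : ℝ) (hη : 0 < η) (u : Fin n → ℝ) (hu : u ⬝ᵥ u = 1)
    (heig : S *ᵥ u = η • u)
    (hmaxeig : ∀ (μ : ℝ) (v : Fin n → ℝ), v ≠ 0 → S *ᵥ v = μ • v → μ ≤ η) :
    (-η) • vecMulVec u u ∈
        tangentConeAt ℝ {M : Matrix (Fin n) (Fin n) ℝ | M.PosSemidef} S ∧
      ((-η) • vecMulVec u u).trace = -η ∧ (-η : ℝ) < 0 :=
  stmt12_general S hS η hη u hu heig
end

section
/- Let h₁, f₂ be vectors in ℝ^{r₁} and h₂ a vector in ℝ^{r₂} with ‖f₂‖ ≤ ‖h₂‖, and let P₁, P₂ ≥ 0. Define for nonnegative reals S₁, S₂ the function R_s(S₁, S₂) = ½·log det( I + S₁·h₁h₁ᵀ·(I + S₂·f₂f₂ᵀ)⁻¹ ) + ½·log det( I + S₂·h₂h₂ᵀ ). Then for all S₁ ∈ [0, P₁] and S₂ ∈ [0, P₂], R_s(S₁, S₂) ≤ R_s(P₁, P₂); that is, R_s is maximized over [0,P₁]×[0,P₂] at full power (P₁, P₂). -/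
/-!
Since `(I + S₁ h₁h₁ᵀ (I + S₂ f₂f₂ᵀ)⁻¹)(I + S₂ f₂f₂ᵀ) = I + S₁ h₁h₁ᵀ + S₂ f₂f₂ᵀ`, the sum rate equals
`½ log det (I + S₁ h₁h₁ᵀ + S₂ f₂f₂ᵀ) + ½ log ((1 + S₂‖h₂‖²) / (1 + S₂‖f₂‖²))`.
The rank-two determinant is
`1 + S₁‖h₁‖² + S₂‖f₂‖² + S₁S₂(‖h₁‖²‖f₂‖² - ⟨h₁, f₂⟩²)`, a polynomial with coefficients that are
nonnegative by Cauchy–Schwarz, hence increasing in both powers; the ratio is increasing in `S₂`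
exactly because `‖f₂‖ ≤ ‖h₂‖`.
-/

open Matrix

section Determinants

variable {n R : Type*} [Fintype n] [DecidableEq n]

theorem det_one_add_vecMulVec_add_vecMulVec [CommRing R] (a b c d : n → R) :
    (1 + vecMulVec a b + vecMulVec c d).det =
      (1 + b ⬝ᵥ a) * (1 + d ⬝ᵥ c) - (b ⬝ᵥ c) * (d ⬝ᵥ a) := by
  have hUV : vecMulVec a b + vecMulVec c d = (of fun i => ![a i, c i]) * of ![b, d] := by
    ext i j
    simp [mul_apply, vecMulVec_apply, Fin.sum_univ_two]
  rw [add_assoc, hUV, det_one_add_mul_comm, det_fin_two]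
  simp [vecMul, dotProduct, mul_comm]

theorem det_one_add_smul_vecMulVec_self [CommRing R] (t : R) (v : n → R) :
    (1 + t • vecMulVec v v).det = 1 + t * (v ⬝ᵥ v) := by
  rw [← smul_vecMulVec, vecMulVec_eq Unit, det_one_add_replicateCol_mul_replicateRow,
    dotProduct_smul, smul_eq_mul]

theorem det_one_add_smul_vecMulVec_add_smul_vecMulVec [CommRing R] (s t : R) (u v : n → R) :
    (1 + s • vecMulVec u u + t • vecMulVec v v).det =
      1 + s * (u ⬝ᵥ u) + t * (v ⬝ᵥ v) + s * t * ((u ⬝ᵥ u) * (v ⬝ᵥ v) - (u ⬝ᵥ v) ^ 2) := by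
  rw [← smul_vecMulVec, ← smul_vecMulVec, det_one_add_vecMulVec_add_vecMulVec]
  simp only [dotProduct_smul, smul_eq_mul, dotProduct_comm v u]
  ring

theorem det_one_add_mul_inv [Field R] {N : Matrix n n R} (hN : IsUnit N.det) (X : Matrix n n R) :
    (1 + X * N⁻¹).det = (N + X).det / N.det := by
  rw [eq_div_iff hN.ne_zero, ← det_mul, add_mul, one_mul, Matrix.mul_assoc, nonsing_inv_mul _ hN,
    Matrix.mul_one, add_comm]

end Determinants

section Real

variable {n : Type*} [Fintype n]

theorem dotProduct_self_nonneg (u : n → ℝ) : 0 ≤ u ⬝ᵥ u :=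
  Finset.sum_nonneg fun i _ => mul_self_nonneg (u i)

theorem dotProduct_sq_le_mul (u v : n → ℝ) : (u ⬝ᵥ v) ^ 2 ≤ (u ⬝ᵥ u) * (v ⬝ᵥ v) := by
  simpa [dotProduct, sq] using Finset.sum_mul_sq_le_sq_mul_sq Finset.univ u v

variable [DecidableEq n]

theorem det_one_add_smul_vecMulVec_mul_inv (s : ℝ) {t : ℝ} (ht : 0 ≤ t) (u v : n → ℝ) :
    (1 + s • vecMulVec u u * (1 + t • vecMulVec v v)⁻¹).det =
      (1 + s • vecMulVec u u + t • vecMulVec v v).det / (1 + t * (v ⬝ᵥ v)) := by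
  have hpos : 0 < 1 + t * (v ⬝ᵥ v) := by have := dotProduct_self_nonneg v; positivity
  have hunit : IsUnit (1 + t • vecMulVec v v).det := by
    rw [det_one_add_smul_vecMulVec_self]
    exact hpos.ne'.isUnit
  rw [det_one_add_mul_inv hunit, det_one_add_smul_vecMulVec_self, add_right_comm]

theorem det_one_add_smul_vecMulVec_add_smul_vecMulVec_le {s s' t t' : ℝ}
    (hs : 0 ≤ s) (hss' : s ≤ s') (ht : 0 ≤ t) (htt' : t ≤ t') (u v : n → ℝ) :
    (1 + s • vecMulVec u u + t • vecMulVec v v).det ≤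
      (1 + s' • vecMulVec u u + t' • vecMulVec v v).det := by
  simp only [det_one_add_smul_vecMulVec_add_smul_vecMulVec]
  have hu := dotProduct_self_nonneg u
  have hv := dotProduct_self_nonneg v
  have hG := sub_nonneg.2 (dotProduct_sq_le_mul u v)
  have hs' := hs.trans hss'
  gcongr

theorem one_add_mul_div_one_add_mul_le {F H t t' : ℝ} (hF : 0 ≤ F) (hFH : F ≤ H)
    (ht : 0 ≤ t) (htt' : t ≤ t') :
    (1 + t * H) / (1 + t * F) ≤ (1 + t' * H) / (1 + t' * F) := by
  have ht' := ht.trans htt'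
  rw [div_le_div_iff₀ (by positivity) (by positivity)]
  nlinarith [mul_nonneg (sub_nonneg.2 htt') (sub_nonneg.2 hFH)]

end Real

theorem half_log_add_half_log_le {x y x' y' : ℝ} (hx : 0 < x) (hy : 0 < y) (h : x * y ≤ x' * y') :
    1 / 2 * Real.log x + 1 / 2 * Real.log y ≤ 1 / 2 * Real.log x' + 1 / 2 * Real.log y' := by
  have hxy' : x' * y' ≠ 0 := (mul_pos hx hy |>.trans_le h).ne'
  rw [← mul_add, ← mul_add, ← Real.log_mul hx.ne' hy.ne',
    ← Real.log_mul (left_ne_zero_of_mul hxy') (right_ne_zero_of_mul hxy')]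
  gcongr

theorem stmt13_general {r₁ r₂ : ℕ} (h₁ f₂ : Fin r₁ → ℝ) (h₂ : Fin r₂ → ℝ)
    (hnorm : Real.sqrt (f₂ ⬝ᵥ f₂) ≤ Real.sqrt (h₂ ⬝ᵥ h₂))
    (P₁ P₂ : ℝ) (hP₂ : 0 ≤ P₂)
    (S₁ S₂ : ℝ) (hS₁ : S₁ ∈ Set.Icc 0 P₁) (hS₂ : S₂ ∈ Set.Icc 0 P₂) :
    (1/2) * Real.log ((1 + S₁ • vecMulVec h₁ h₁ * (1 + S₂ • vecMulVec f₂ f₂)⁻¹).det) +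
        (1/2) * Real.log ((1 + S₂ • vecMulVec h₂ h₂).det) ≤
      (1/2) * Real.log ((1 + P₁ • vecMulVec h₁ h₁ * (1 + P₂ • vecMulVec f₂ f₂)⁻¹).det) +
        (1/2) * Real.log ((1 + P₂ • vecMulVec h₂ h₂).det) := by
  obtain ⟨hS₁, hS₁P⟩ := hS₁
  obtain ⟨hS₂, hS₂P⟩ := hS₂
  have hF := dotProduct_self_nonneg f₂
  have hH := dotProduct_self_nonneg h₂
  have hFH : f₂ ⬝ᵥ f₂ ≤ h₂ ⬝ᵥ h₂ := (Real.sqrt_le_sqrt_iff hH).1 hnorm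
  have hD : 1 ≤ (1 + S₁ • vecMulVec h₁ h₁ + S₂ • vecMulVec f₂ f₂).det := by
    simpa using det_one_add_smul_vecMulVec_add_smul_vecMulVec_le le_rfl hS₁ le_rfl hS₂ h₁ f₂
  have hDle := det_one_add_smul_vecMulVec_add_smul_vecMulVec_le hS₁ hS₁P hS₂ hS₂P h₁ f₂
  simp only [det_one_add_smul_vecMulVec_mul_inv _ hS₂, det_one_add_smul_vecMulVec_mul_inv _ hP₂,
    det_one_add_smul_vecMulVec_self]
  apply half_log_add_half_log_le (div_pos (by linarith) (by positivity)) (by positivity)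
  rw [div_mul_eq_mul_div, div_mul_eq_mul_div, mul_div_assoc, mul_div_assoc]
  have hratio := one_add_mul_div_one_add_mul_le hF hFH hS₂ hS₂P
  gcongr ?_ * ?_
  linarith

/-- SIMO Z interference channel (Proposition 4 core): if `‖f₂‖ ≤ ‖h₂‖`, the
treating-interference-as-noise sum rate is maximized at full power `(P₁, P₂)`. -/
theorem stmt13 {r₁ r₂ : ℕ} (h₁ f₂ : Fin r₁ → ℝ) (h₂ : Fin r₂ → ℝ)
    (hnorm : Real.sqrt (f₂ ⬝ᵥ f₂) ≤ Real.sqrt (h₂ ⬝ᵥ h₂))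
    (P₁ P₂ : ℝ) (hP₁ : 0 ≤ P₁) (hP₂ : 0 ≤ P₂)
    (S₁ S₂ : ℝ) (hS₁ : S₁ ∈ Set.Icc 0 P₁) (hS₂ : S₂ ∈ Set.Icc 0 P₂) :
    (1/2) * Real.log ((1 + S₁ • vecMulVec h₁ h₁ * (1 + S₂ • vecMulVec f₂ f₂)⁻¹).det) +
        (1/2) * Real.log ((1 + S₂ • vecMulVec h₂ h₂).det) ≤
      (1/2) * Real.log ((1 + P₁ • vecMulVec h₁ h₁ * (1 + P₂ • vecMulVec f₂ f₂)⁻¹).det) +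
        (1/2) * Real.log ((1 + P₂ • vecMulVec h₂ h₂).det) :=
  stmt13_general h₁ f₂ h₂ hnorm P₁ P₂ hP₂ S₁ S₂ hS₁ hS₂
end

section
/- Let β ∈ (0, π/2] and define g(ω) = (1 + cos ω)/sin(ω + β) for ω ∈ [0, π/2] with sin(ω + β) > 0. Then: (i) if β ∈ (0, π/4], then for all such ω, g(ω) ≥ 1/cos β, with equality at ω = π/2; (ii) if β ∈ [π/4, π/2], then for all such ω, g(ω) ≥ 2·sin β, with equality at ω = π − 2β. -/
open Real

/-- Minimization of `g(ω) = (1 + cos ω)/sin(ω + β)` over `ω ∈ [0, π/2]` with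
`sin(ω + β) > 0`: for `β ∈ (0, π/4]` the minimum is `1/cos β`, attained at `ω = π/2`;
for `β ∈ [π/4, π/2]` the minimum is `2 sin β`, attained at `ω = π - 2β`. -/
theorem stmt16 (β : ℝ) (hβ : β ∈ Set.Ioc 0 (π / 2)) :
    (β ≤ π / 4 →
      (∀ ω ∈ Set.Icc 0 (π / 2), 0 < Real.sin (ω + β) →
        1 / Real.cos β ≤ (1 + Real.cos ω) / Real.sin (ω + β)) ∧
      (1 + Real.cos (π / 2)) / Real.sin (π / 2 + β) = 1 / Real.cos β) ∧
    (π / 4 ≤ β →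
      (∀ ω ∈ Set.Icc 0 (π / 2), 0 < Real.sin (ω + β) →
        2 * Real.sin β ≤ (1 + Real.cos ω) / Real.sin (ω + β)) ∧
      (1 + Real.cos (π - 2 * β)) / Real.sin (π - 2 * β + β) = 2 * Real.sin β) := by
  obtain ⟨hβ0, hβ2⟩ := hβ
  have hπ := Real.pi_pos
  constructor
  · intro hβ4
    have hcb : 0 < Real.cos β := Real.cos_pos_of_mem_Ioo ⟨by linarith, by linarith⟩
    constructor
    · intro ω hω hs
      obtain ⟨hω0, hω2⟩ := hω
      have hcω : 0 ≤ Real.cos ω := Real.cos_nonneg_of_mem_Icc ⟨by linarith, hω2⟩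
      have hsβcβ : Real.sin β ≤ Real.cos β := by
        rw [← Real.cos_pi_div_two_sub]
        exact Real.cos_le_cos_of_nonneg_of_le_pi (le_of_lt hβ0) (by linarith) (by linarith)
      rw [div_le_div_iff₀ hcb hs, Real.sin_add]
      nlinarith [Real.sin_le_one ω, Real.sin_nonneg_of_nonneg_of_le_pi hω0 (by linarith)]
    · rw [Real.cos_pi_div_two, Real.sin_add, Real.sin_pi_div_two, Real.cos_pi_div_two]
      ring_nf
  · intro hβ4
    constructor
    · intro ω hω hs
      rw [le_div_iff₀ hs, Real.sin_add]
      have key : 2 * Real.sin β * (Real.sin ω * Real.cos β + Real.cos ω * Real.sin β)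
          = Real.cos ω - Real.cos (ω + 2 * β) := by
        rw [Real.cos_add, Real.cos_two_mul, Real.sin_two_mul]
        linear_combination (2 * Real.cos ω) * Real.sin_sq_add_cos_sq β
      linarith [Real.neg_one_le_cos (ω + 2 * β)]
    · have h1 : π - 2 * β + β = π - β := by ring
      have hsβ : 0 < Real.sin β := Real.sin_pos_of_pos_of_lt_pi hβ0 (by linarith)
      rw [h1, Real.sin_pi_sub, Real.cos_pi_sub, div_eq_iff hsβ.ne']
      nlinarith [Real.cos_two_mul β, Real.sin_sq_add_cos_sq β]
end

section
/- Let h₁, f₂ be vectors in ℝ^{r₁}, and h₂, f₁ vectors in ℝ^{r₂}, and let P₁, P₂ > 0. Suppose there exist an r₁×r₂ real matrix A₁, an r₂×r₁ real matrix A₂, and symmetric positive definite matrices Σ₁ (r₂×r₂), Σ₂ (r₁×r₁) such that: A₁ᵀ·(I + P₂·f₂f₂ᵀ)⁻¹·h₁ = f₁; A₂ᵀ·(I + P₁·f₁f₁ᵀ)⁻¹·h₂ = f₂; Σ₁ = I − A₂Σ₂⁻¹A₂ᵀ; Σ₂ = I − A₁Σ₁⁻¹A₁ᵀ; Σ₁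 − A₁ᵀA₁ is positive definite; and Σ₂ − A₂ᵀA₂ is positive definite. Define, for scalars S₁, S₂ ≥ 0, R_su(S₁,S₂) = ½·log det( I + S₁·[h₁; f₁]·[h₁; f₁]ᵀ·(E₁ + S₂·[f₂; 0]·[f₂; 0]ᵀ)⁻¹ ) + ½·log det( I + S₂·[h₂; f₂]·[h₂; f₂]ᵀ·(E₂ + S₁·[f₁; 0]·[f₁; 0]ᵀ)⁻¹ ), where Eᵢ = fromBlocks(I, Aᵢ; Aᵢᵀ, Σᵢ), [x; y] denotes the concatenated column vector, and in [f₂; 0] the zero block has length r₂ while in [f₁; 0] it has length r₁. Then for all S₁ ∈ [0, P₁] and S₂ ∈ [0, P₂], R_su(S₁, S₂) ≤ R_su(P₁, P₂), and R_su(P₁, P₂) = ½·log det( I + P₁·h₁h₁ᵀ·(I + P₂·f₂f₂ᵀ)⁻¹ ) + ½·log det( I + P₂·h₂h₂ᵀ·(I + P₁·f₁f₁ᵀ)⁻¹ ). -/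
/-!
Write `vᵢ = (I + Pⱼ fⱼ fⱼᵀ)⁻¹ hᵢ`. The first genie condition says `[hᵢ; fᵢ] = Eᵢ [vᵢ; 0] + Pⱼ (fⱼ ⬝ vᵢ) [fⱼ; 0]`,
and the second one makes `Σⱼ` the Schur complement of `Σᵢ` in `Eᵢ`, so that `Eᵢ⁻¹ [fⱼ; 0]` is explicit.
The system `(Eᵢ + Y [fⱼ; 0][fⱼ; 0]ᵀ) z = [hᵢ; fᵢ]` can then be solved in closed form, and each log-det
term of `R_su(S₁, S₂)` collapses to `log (1 + Sᵢ · effSnr mᵢ gⱼ tᵢ Pⱼ Sⱼ)` with `mᵢ = |vᵢ|²`,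
`gⱼ = fⱼᵀ Σⱼ⁻¹ fⱼ`, `tᵢ = fⱼ ⬝ vᵢ`; at full power `Sⱼ = Pⱼ` this is the treating-interference-as-noise
value. What remains is scalar: raising `S₁` to `P₁` and then `S₂` to `P₂` never decreases the product of
the two factors, thanks to `gᵢ ≤ mᵢ` (the Schur complement `Σⱼ` is positive) and the Cauchy–Schwarz
bound `tᵢ² ≤ gⱼ mᵢ` in the inner product defined by `Σⱼ`.
-/

open Matrix

/-- The value of `uᵀ (E + Y wwᵀ)⁻¹ u` computed in
`Matrix.det_one_add_smul_vecMulVec_mul_inv_add_smul_vecMulVec`: the genie-aided SNR of a user whose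
interferer transmits at power `Y`. -/
noncomputable def effSnr (m g t P Y : ℝ) : ℝ :=
  m + P * t ^ 2 + t ^ 2 * (1 + P * g) * (P - Y) / (1 + Y * g)

theorem effSnr_self (m g t P : ℝ) : effSnr m g t P P = m + P * t ^ 2 := by
  simp [effSnr]

theorem le_effSnr {m g t P Y : ℝ} (hg : 0 ≤ g) (hY : 0 ≤ Y) (hYP : Y ≤ P) :
    m + P * t ^ 2 ≤ effSnr m g t P Y := by
  have : 0 ≤ P := hY.trans hYP
  have : 0 ≤ t ^ 2 * (1 + P * g) * (P - Y) / (1 + Y * g) :=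
    div_nonneg (mul_nonneg (by positivity) (sub_nonneg.2 hYP)) (by positivity)
  unfold effSnr
  linarith

theorem one_add_mul_effSnr_pos {m g t P S Y : ℝ} (hm : 0 ≤ m) (hg : 0 ≤ g) (hS : 0 ≤ S)
    (hY : 0 ≤ Y) (hYP : Y ≤ P) : 0 < 1 + S * effSnr m g t P Y := by
  have : 0 ≤ P := hY.trans hYP
  have := mul_nonneg hS ((by positivity : 0 ≤ m + P * t ^ 2).trans (le_effSnr hg hY hYP))
  linarith

theorem one_add_mul_mul_one_add_mul_effSnr_le {a m g t P S Q : ℝ} (hg : 0 ≤ g) (hga : g ≤ a)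
    (hm : 0 ≤ m) (ht : t ^ 2 ≤ g * m) (hS : 0 ≤ S) (hSP : S ≤ P) (hQ : 0 ≤ Q) :
    (1 + S * a) * (1 + Q * effSnr m g t P S) ≤ (1 + P * a) * (1 + Q * effSnr m g t P P) := by
  have hP : 0 ≤ P := hS.trans hSP
  have ha : 0 ≤ a := hg.trans hga
  have hd : 0 < 1 + S * g := by positivity
  have hdiff : (1 + P * a) * (1 + Q * effSnr m g t P P) - (1 + S * a) * (1 + Q * effSnr m g t P S)
      = (P - S) * (a + S * a * g + Q * (a * m - t ^ 2) + Q * P * t ^ 2 * (a - g)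
          + S * a * Q * (g * m - t ^ 2)) / (1 + S * g) := by
    rw [effSnr_self]; unfold effSnr; field_simp; ring
  have ham : t ^ 2 ≤ a * m := ht.trans (mul_le_mul_of_nonneg_right hga hm)
  rw [← sub_nonneg, hdiff]
  apply div_nonneg _ hd.le
  apply mul_nonneg (sub_nonneg.2 hSP)
  have := mul_nonneg hQ (sub_nonneg.2 ham)
  have := mul_nonneg (mul_nonneg (mul_nonneg hQ hP) (sq_nonneg t)) (sub_nonneg.2 hga)
  have := mul_nonneg (mul_nonneg (mul_nonneg hS ha) hQ) (sub_nonneg.2 ht)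
  have := mul_nonneg (mul_nonneg hS ha) hg
  linarith

theorem one_add_mul_effSnr_mul_one_add_mul_effSnr_le {m₁ g₁ s m₂ g₂ t P₁ P₂ S₁ S₂ : ℝ}
    (hg₁ : 0 ≤ g₁) (hg₂ : 0 ≤ g₂) (hgm₁ : g₂ ≤ m₁) (hgm₂ : g₁ ≤ m₂)
    (hs : s ^ 2 ≤ g₁ * m₁) (ht : t ^ 2 ≤ g₂ * m₂)
    (hS₁ : 0 ≤ S₁) (hS₁P : S₁ ≤ P₁) (hS₂ : 0 ≤ S₂) (hS₂P : S₂ ≤ P₂) :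
    (1 + S₁ * effSnr m₁ g₁ s P₂ S₂) * (1 + S₂ * effSnr m₂ g₂ t P₁ S₁) ≤
      (1 + P₁ * effSnr m₁ g₁ s P₂ P₂) * (1 + P₂ * effSnr m₂ g₂ t P₁ P₁) := by
  have hm₁ : 0 ≤ m₁ := hg₂.trans hgm₁
  have hm₂ : 0 ≤ m₂ := hg₁.trans hgm₂
  have hP₁ : 0 ≤ P₁ := hS₁.trans hS₁P
  have hP₂ : 0 ≤ P₂ := hS₂.trans hS₂P
  have hga₁ : g₂ ≤ effSnr m₁ g₁ s P₂ S₂ :=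
    (hgm₁.trans (le_add_of_nonneg_right (by positivity))).trans (le_effSnr hg₁ hS₂ hS₂P)
  have hga₂ : g₁ ≤ effSnr m₂ g₂ t P₁ P₁ := by
    rw [effSnr_self]; exact hgm₂.trans (le_add_of_nonneg_right (by positivity))
  calc _ ≤ (1 + P₁ * effSnr m₁ g₁ s P₂ S₂) * (1 + S₂ * effSnr m₂ g₂ t P₁ P₁) :=
        one_add_mul_mul_one_add_mul_effSnr_le hg₂ hga₁ hm₂ ht hS₁ hS₁P hS₂
    _ = (1 + S₂ * effSnr m₂ g₂ t P₁ P₁) * (1 + P₁ * effSnr m₁ g₁ s P₂ S₂) := mul_comm _ _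
    _ ≤ (1 + P₂ * effSnr m₂ g₂ t P₁ P₁) * (1 + P₁ * effSnr m₁ g₁ s P₂ P₂) :=
        one_add_mul_mul_one_add_mul_effSnr_le hg₁ hga₂ hm₁ hs hS₂ hS₂P hP₁
    _ = _ := mul_comm _ _

theorem log_one_add_mul_effSnr_add_log_le {m₁ g₁ s m₂ g₂ t P₁ P₂ S₁ S₂ : ℝ}
    (hg₁ : 0 ≤ g₁) (hg₂ : 0 ≤ g₂) (hgm₁ : g₂ ≤ m₁) (hgm₂ : g₁ ≤ m₂)
    (hs : s ^ 2 ≤ g₁ * m₁) (ht : t ^ 2 ≤ g₂ * m₂)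
    (hS₁ : 0 ≤ S₁) (hS₁P : S₁ ≤ P₁) (hS₂ : 0 ≤ S₂) (hS₂P : S₂ ≤ P₂) :
    Real.log (1 + S₁ * effSnr m₁ g₁ s P₂ S₂) + Real.log (1 + S₂ * effSnr m₂ g₂ t P₁ S₁) ≤
      Real.log (1 + P₁ * effSnr m₁ g₁ s P₂ P₂) + Real.log (1 + P₂ * effSnr m₂ g₂ t P₁ P₁) := by
  have hm₁ : 0 ≤ m₁ := hg₂.trans hgm₁
  have hm₂ : 0 ≤ m₂ := hg₁.trans hgm₂
  have h₁ := one_add_mul_effSnr_pos (t := s) hm₁ hg₁ hS₁ hS₂ hS₂P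
  have h₂ := one_add_mul_effSnr_pos (t := t) hm₂ hg₂ hS₂ hS₁ hS₁P
  have h₁' := one_add_mul_effSnr_pos (t := s) hm₁ hg₁ (hS₁.trans hS₁P) (hS₂.trans hS₂P) le_rfl
  have h₂' := one_add_mul_effSnr_pos (t := t) hm₂ hg₂ (hS₂.trans hS₂P) (hS₁.trans hS₁P) le_rfl
  rw [← Real.log_mul h₁.ne' h₂.ne', ← Real.log_mul h₁'.ne' h₂'.ne']
  exact Real.log_le_log (mul_pos h₁ h₂)
    (one_add_mul_effSnr_mul_one_add_mul_effSnr_le hg₁ hg₂ hgm₁ hgm₂ hs ht hS₁ hS₁P hS₂ hS₂P)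

namespace Matrix

variable {n : Type*} [Fintype n]

theorem det_one_add_smul_vecMulVec_self_mul [DecidableEq n] (c : ℝ) (u : n → ℝ)
    (N : Matrix n n ℝ) : (1 + c • vecMulVec u u * N).det = 1 + c * (u ⬝ᵥ N *ᵥ u) := by
  rw [← smul_vecMulVec, vecMulVec_mul, vecMulVec_eq Unit,
    det_one_add_replicateCol_mul_replicateRow, dotProduct_smul, ← dotProduct_mulVec, smul_eq_mul]

theorem PosDef.add_smul_vecMulVec_self {E : Matrix n n ℝ} (hE : E.PosDef) {Y : ℝ} (hY : 0 ≤ Y)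
    (w : n → ℝ) : (E + Y • vecMulVec w w).PosDef := by
  simpa using hE.add_posSemidef ((posSemidef_vecMulVec_self_star w).smul hY)

theorem PosSemidef.dotProduct_mulVec_sq_le {W : Matrix n n ℝ} (hW : W.PosSemidef) (x y : n → ℝ) :
    (x ⬝ᵥ W *ᵥ y) ^ 2 ≤ (x ⬝ᵥ W *ᵥ x) * (y ⬝ᵥ W *ᵥ y) := by
  let _ := W.toSeminormedAddCommGroup hW
  let _ := W.toInnerProductSpace hW
  have h := real_inner_mul_inner_self_le x y
  change (W *ᵥ y ⬝ᵥ star x) * (W *ᵥ y ⬝ᵥ star x) ≤ (W *ᵥ x ⬝ᵥ star x) * (W *ᵥ y ⬝ᵥ star y) at h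
  simpa [dotProduct_comm, sq] using h

theorem PosDef.dotProduct_inv_mulVec_self_nonneg [DecidableEq n] {W : Matrix n n ℝ}
    (hW : W.PosDef) (x : n → ℝ) : 0 ≤ x ⬝ᵥ W⁻¹ *ᵥ x := by
  simpa using hW.inv.posSemidef.dotProduct_mulVec_nonneg x

theorem add_smul_vecMulVec_mulVec (E : Matrix n n ℝ) {w y : n → ℝ} (hy : E *ᵥ y = w)
    (x : n → ℝ) (P Y : ℝ) (hg : 1 + Y * (w ⬝ᵥ y) ≠ 0) :
    (E + Y • vecMulVec w w) *ᵥ (x + ((P - Y) * (w ⬝ᵥ x) / (1 + Y * (w ⬝ᵥ y))) • y) =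
      E *ᵥ x + (P * (w ⬝ᵥ x)) • w := by
  set κ := (P - Y) * (w ⬝ᵥ x) / (1 + Y * (w ⬝ᵥ y))
  have hκ : κ + Y * (w ⬝ᵥ x + κ * (w ⬝ᵥ y)) = P * (w ⬝ᵥ x) := by
    unfold κ; field_simp; ring
  rw [add_mulVec, mulVec_add, mulVec_add, mulVec_smul, hy, smul_mulVec, smul_mulVec,
    vecMulVec_mulVec, vecMulVec_mulVec, dotProduct_smul, op_smul_eq_smul, op_smul_eq_smul,
    ← hκ]
  module

theorem det_one_add_smul_vecMulVec_mul_inv_add_smul_vecMulVec [DecidableEq n]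
    {E : Matrix n n ℝ} (hE : E.PosDef) {w y : n → ℝ} (hy : E *ᵥ y = w) {x u : n → ℝ} {P : ℝ}
    (hu : E *ᵥ x + (P * (w ⬝ᵥ x)) • w = u) {Y : ℝ} (hY : 0 ≤ Y) (S : ℝ) :
    (1 + S • vecMulVec u u * (E + Y • vecMulVec w w)⁻¹).det =
      1 + S * effSnr (x ⬝ᵥ E *ᵥ x) (w ⬝ᵥ y) (w ⬝ᵥ x) P Y := by
  have hEsymm : Eᵀ = E := by simpa using hE.isHermitian.eq
  have hg : 0 ≤ w ⬝ᵥ y := by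
    simpa [← hy, dotProduct_comm] using hE.posSemidef.dotProduct_mulVec_nonneg y
  have hEy : E *ᵥ x ⬝ᵥ y = w ⬝ᵥ x := by
    rw [dotProduct_comm, dotProduct_mulVec, ← mulVec_transpose, hEsymm, hy, dotProduct_comm]
  have := (hE.add_smul_vecMulVec_self hY w).isUnit.invertible
  rw [det_one_add_smul_vecMulVec_self_mul,
    inv_mulVec_eq_vec (hu ▸ add_smul_vecMulVec_mulVec E hy x P Y (by positivity)).symm, ← hu]
  simp only [add_dotProduct, dotProduct_add, smul_dotProduct, dotProduct_smul, smul_eq_mul, hEy,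
    dotProduct_comm (E *ᵥ x) x]
  unfold effSnr
  field_simp

theorem exists_add_smul_eq_and_mul_inv_mulVec [DecidableEq n] {m : Type*} {P : ℝ} (hP : 0 ≤ P)
    (B : Matrix m n ℝ) (f h : n → ℝ) :
    ∃ v, v + (P * (f ⬝ᵥ v)) • f = h ∧ (B * (1 + P • vecMulVec f f)⁻¹) *ᵥ h = B *ᵥ v := by
  refine ⟨(1 + P • vecMulVec f f)⁻¹ *ᵥ h, ?_, (mulVec_mulVec _ _ _).symm⟩
  have hK := (PosDef.one.add_smul_vecMulVec_self hP f).det_pos.ne'.isUnit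
  calc _ = (1 + P • vecMulVec f f) *ᵥ (1 + P • vecMulVec f f)⁻¹ *ᵥ h := by
        rw [add_mulVec, one_mulVec, smul_mulVec, vecMulVec_mulVec, op_smul_eq_smul, smul_smul]
    _ = h := by rw [mulVec_mulVec, mul_nonsing_inv _ hK, one_mulVec]

variable {p q : Type*} [Fintype p] [Fintype q] [DecidableEq p] [DecidableEq q]

theorem posDef_fromBlocks_one {A : Matrix p q ℝ} {D : Matrix q q ℝ} (hD : (D - Aᵀ * A).PosDef) :
    (fromBlocks 1 A Aᵀ D).PosDef := by
  have hpsd : (fromBlocks 1 A Aᵀ D).PosSemidef := by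
    let _ : Invertible (1 : Matrix p p ℝ) := invertibleOne
    simpa using (PosDef.fromBlocks₁₁ A D PosDef.one).2 (by simpa using hD.posSemidef)
  rw [hpsd.posDef_iff_det_ne_zero, det_fromBlocks_one₁₁]
  exact hD.det_pos.ne'

theorem fromBlocks_one_mulVec_sumElim (A : Matrix p q ℝ) {D : Matrix q q ℝ} (hD : IsUnit D.det)
    (d : p → ℝ) :
    fromBlocks 1 A Aᵀ D *ᵥ Sum.elim d (-(D⁻¹ *ᵥ Aᵀ *ᵥ d)) =
      Sum.elim ((1 - A * D⁻¹ * Aᵀ) *ᵥ d) 0 := by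
  have hDD : D *ᵥ D⁻¹ *ᵥ Aᵀ *ᵥ d = Aᵀ *ᵥ d := by
    rw [mulVec_mulVec, mul_nonsing_inv _ hD, one_mulVec]
  rw [fromBlocks_mulVec, Sum.elim_comp_inl, Sum.elim_comp_inr, one_mulVec, mulVec_neg, mulVec_neg,
    hDD, add_neg_cancel, mulVec_mulVec, mulVec_mulVec, sub_mulVec, one_mulVec, sub_eq_add_neg]

end Matrix

section Genie

-- One user of the channel: `Sg`, `Sg'` are its `Σᵢ`, `Σⱼ`, `f'` is the interferer's `fⱼ`, and
-- `v = (I + P f' f'ᵀ)⁻¹ h` (see `Matrix.exists_add_smul_eq_and_mul_inv_mulVec`).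
variable {p q : Type*} [Fintype p] [Fintype q] [DecidableEq p] [DecidableEq q]
  {A : Matrix p q ℝ} {Sg : Matrix q q ℝ} {Sg' : Matrix p p ℝ} {h f' v : p → ℝ} {f : q → ℝ} {P : ℝ}

theorem det_one_add_smul_vecMulVec_mul_inv_fromBlocks (hSg : Sg.PosDef) (hSg' : Sg'.PosDef)
    (hRic : Sg' = 1 - A * Sg⁻¹ * Aᵀ) (hPD : (Sg - Aᵀ * A).PosDef)
    (hv : v + (P * (f' ⬝ᵥ v)) • f' = h) (hf : Aᵀ *ᵥ v = f) {Y : ℝ} (hY : 0 ≤ Y) (S : ℝ) :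
    (1 + S • vecMulVec (Sum.elim h f) (Sum.elim h f) *
        (fromBlocks 1 A Aᵀ Sg + Y • vecMulVec (Sum.elim f' (0 : q → ℝ)) (Sum.elim f' 0))⁻¹).det =
      1 + S * effSnr (v ⬝ᵥ v) (f' ⬝ᵥ Sg'⁻¹ *ᵥ f') (f' ⬝ᵥ v) P Y := by
  have hy : fromBlocks 1 A Aᵀ Sg *ᵥ Sum.elim (Sg'⁻¹ *ᵥ f') (-(Sg⁻¹ *ᵥ Aᵀ *ᵥ Sg'⁻¹ *ᵥ f')) =
      Sum.elim f' 0 := by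
    rw [fromBlocks_one_mulVec_sumElim A hSg.det_pos.ne'.isUnit, ← hRic, mulVec_mulVec,
      mul_nonsing_inv _ hSg'.det_pos.ne'.isUnit, one_mulVec]
  have hu : fromBlocks 1 A Aᵀ Sg *ᵥ Sum.elim v 0 +
      (P * (Sum.elim f' (0 : q → ℝ) ⬝ᵥ Sum.elim v 0)) • Sum.elim f' 0 = Sum.elim h f := by
    rw [← hv, ← hf]
    ext (i | i) <;> simp [fromBlocks_mulVec, sumElim_dotProduct_sumElim]
  simpa [fromBlocks_mulVec, sumElim_dotProduct_sumElim] using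
    det_one_add_smul_vecMulVec_mul_inv_add_smul_vecMulVec (posDef_fromBlocks_one hPD) hy hu hY S

theorem det_one_add_smul_vecMulVec_mul_inv_one_add (hP : 0 ≤ P)
    (hv : v + (P * (f' ⬝ᵥ v)) • f' = h) (S : ℝ) :
    (1 + S • vecMulVec h h * (1 + P • vecMulVec f' f')⁻¹).det =
      1 + S * (v ⬝ᵥ v + P * (f' ⬝ᵥ v) ^ 2) := by
  have := det_one_add_smul_vecMulVec_mul_inv_add_smul_vecMulVec PosDef.one (one_mulVec f')
    (x := v) (u := h) (by rwa [one_mulVec]) hP S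
  rwa [effSnr_self, one_mulVec] at this

theorem dotProduct_mulVec_eq_sub (hRic : Sg' = 1 - A * Sg⁻¹ * Aᵀ) (hf : Aᵀ *ᵥ v = f) :
    v ⬝ᵥ Sg' *ᵥ v = v ⬝ᵥ v - f ⬝ᵥ Sg⁻¹ *ᵥ f := by
  rw [hRic, sub_mulVec, one_mulVec, dotProduct_sub, ← mulVec_mulVec, ← mulVec_mulVec,
    dotProduct_mulVec, ← mulVec_transpose, hf]

theorem dotProduct_inv_mulVec_le (hSg' : Sg'.PosDef) (hRic : Sg' = 1 - A * Sg⁻¹ * Aᵀ)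
    (hf : Aᵀ *ᵥ v = f) : f ⬝ᵥ Sg⁻¹ *ᵥ f ≤ v ⬝ᵥ v := by
  have := hSg'.posSemidef.dotProduct_mulVec_nonneg v
  rw [star_trivial, dotProduct_mulVec_eq_sub hRic hf] at this
  linarith

theorem sq_dotProduct_le (hSg : Sg.PosDef) (hSg' : Sg'.PosDef) (hRic : Sg' = 1 - A * Sg⁻¹ * Aᵀ)
    (hf : Aᵀ *ᵥ v = f) : (f' ⬝ᵥ v) ^ 2 ≤ (f' ⬝ᵥ Sg'⁻¹ *ᵥ f') * (v ⬝ᵥ v) := by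
  have hsymm : Sg'ᵀ = Sg' := by simpa using hSg'.isHermitian.eq
  have hcancel : Sg' *ᵥ Sg'⁻¹ *ᵥ f' = f' := by
    rw [mulVec_mulVec, mul_nonsing_inv _ hSg'.det_pos.ne'.isUnit, one_mulVec]
  have hcs := hSg'.posSemidef.dotProduct_mulVec_sq_le (Sg'⁻¹ *ᵥ f') v
  rw [hcancel, dotProduct_mulVec, ← mulVec_transpose, hsymm, hcancel,
    dotProduct_comm (Sg'⁻¹ *ᵥ f'), dotProduct_mulVec_eq_sub hRic hf] at hcs
  have := hSg'.dotProduct_inv_mulVec_self_nonneg f'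
  have := hSg.dotProduct_inv_mulVec_self_nonneg f
  nlinarith

end Genie

/-- Theorem 5 of the paper (SIMO interference channel, optimization core): under the
stated genie conditions, the genie-aided upper bound `R_su` is maximized at full power
`(P₁, P₂)`, where it equals the treating-interference-as-noise lower bound. -/
theorem stmt17 {r₁ r₂ : ℕ}
    (h₁ f₂ : Fin r₁ → ℝ) (h₂ f₁ : Fin r₂ → ℝ)
    (P₁ P₂ : ℝ) (hP₁ : 0 < P₁) (hP₂ : 0 < P₂)
    (A₁ : Matrix (Fin r₁) (Fin r₂) ℝ) (A₂ : Matrix (Fin r₂) (Fin r₁) ℝ)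
    (Sg₁ : Matrix (Fin r₂) (Fin r₂) ℝ) (Sg₂ : Matrix (Fin r₁) (Fin r₁) ℝ)
    (hSg₁ : Sg₁.PosDef) (hSg₂ : Sg₂.PosDef)
    (hMk₁ : (A₁ᵀ * (1 + P₂ • vecMulVec f₂ f₂)⁻¹) *ᵥ h₁ = f₁)
    (hMk₂ : (A₂ᵀ * (1 + P₁ • vecMulVec f₁ f₁)⁻¹) *ᵥ h₂ = f₂)
    (hRic₁ : Sg₁ = 1 - A₂ * Sg₂⁻¹ * A₂ᵀ)
    (hRic₂ : Sg₂ = 1 - A₁ * Sg₁⁻¹ * A₁ᵀ)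
    (hPD₁ : (Sg₁ - A₁ᵀ * A₁).PosDef)
    (hPD₂ : (Sg₂ - A₂ᵀ * A₂).PosDef)
    (Rsu : ℝ → ℝ → ℝ)
    (hRsu : ∀ S₁ S₂, Rsu S₁ S₂ =
      (1/2) * Real.log
        ((1 + S₁ • vecMulVec (Sum.elim h₁ f₁) (Sum.elim h₁ f₁) *
          (fromBlocks 1 A₁ A₁ᵀ Sg₁ +
            S₂ • vecMulVec (Sum.elim f₂ (0 : Fin r₂ → ℝ))
              (Sum.elim f₂ (0 : Fin r₂ → ℝ)))⁻¹).det) +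
      (1/2) * Real.log
        ((1 + S₂ • vecMulVec (Sum.elim h₂ f₂) (Sum.elim h₂ f₂) *
          (fromBlocks 1 A₂ A₂ᵀ Sg₂ +
            S₁ • vecMulVec (Sum.elim f₁ (0 : Fin r₁ → ℝ))
              (Sum.elim f₁ (0 : Fin r₁ → ℝ)))⁻¹).det)) :
    (∀ S₁ ∈ Set.Icc 0 P₁, ∀ S₂ ∈ Set.Icc 0 P₂, Rsu S₁ S₂ ≤ Rsu P₁ P₂) ∧
      Rsu P₁ P₂ =
        (1/2) * Real.log
          ((1 + P₁ • vecMulVec h₁ h₁ * (1 + P₂ • vecMulVec f₂ f₂)⁻¹).det) +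
        (1/2) * Real.log
          ((1 + P₂ • vecMulVec h₂ h₂ * (1 + P₁ • vecMulVec f₁ f₁)⁻¹).det) := by
  obtain ⟨v₁, hv₁, hf₁⟩ := exists_add_smul_eq_and_mul_inv_mulVec hP₂.le A₁ᵀ f₂ h₁
  obtain ⟨v₂, hv₂, hf₂⟩ := exists_add_smul_eq_and_mul_inv_mulVec hP₁.le A₂ᵀ f₁ h₂
  rw [hf₁] at hMk₁
  rw [hf₂] at hMk₂
  have hR : ∀ S₁ S₂, 0 ≤ S₁ → 0 ≤ S₂ → Rsu S₁ S₂ =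
      1 / 2 * Real.log (1 + S₁ * effSnr (v₁ ⬝ᵥ v₁) (f₂ ⬝ᵥ Sg₂⁻¹ *ᵥ f₂) (f₂ ⬝ᵥ v₁) P₂ S₂) +
      1 / 2 * Real.log (1 + S₂ * effSnr (v₂ ⬝ᵥ v₂) (f₁ ⬝ᵥ Sg₁⁻¹ *ᵥ f₁) (f₁ ⬝ᵥ v₂) P₁ S₁) :=
    fun S₁ S₂ hS₁ hS₂ => by
      rw [hRsu, det_one_add_smul_vecMulVec_mul_inv_fromBlocks hSg₁ hSg₂ hRic₂ hPD₁ hv₁ hMk₁ hS₂,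
        det_one_add_smul_vecMulVec_mul_inv_fromBlocks hSg₂ hSg₁ hRic₁ hPD₂ hv₂ hMk₂ hS₁]
  refine ⟨?_, ?_⟩
  · rintro S₁ ⟨hS₁, hS₁P⟩ S₂ ⟨hS₂, hS₂P⟩
    rw [hR S₁ S₂ hS₁ hS₂, hR P₁ P₂ hP₁.le hP₂.le]
    have := log_one_add_mul_effSnr_add_log_le (hSg₂.dotProduct_inv_mulVec_self_nonneg f₂)
      (hSg₁.dotProduct_inv_mulVec_self_nonneg f₁) (dotProduct_inv_mulVec_le hSg₂ hRic₂ hMk₁)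
      (dotProduct_inv_mulVec_le hSg₁ hRic₁ hMk₂) (sq_dotProduct_le hSg₁ hSg₂ hRic₂ hMk₁)
      (sq_dotProduct_le hSg₂ hSg₁ hRic₁ hMk₂) hS₁ hS₁P hS₂ hS₂P
    linarith
  · rw [hR P₁ P₂ hP₁.le hP₂.le, effSnr_self, effSnr_self,
      det_one_add_smul_vecMulVec_mul_inv_one_add hP₂.le hv₁,
      det_one_add_smul_vecMulVec_mul_inv_one_add hP₁.le hv₂]
end
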